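/- In the setting of the truncated rotor-router chains: let R_n^d be the number of returns to a via finite excursions before the n-th return to a, for the rotor walk on the chain truncated at distance d (particles reaching distance d are sent back to a), all with the same initial rotor configuration. Then R_n^{d+1} >= R_n^d for all n and d. -/

import Mathlib

open scoped BigOperators Classical

/-- `(x, r)` is a rotor walk for the rotor mechanism `(d, succ)`.  Rotor values are
`0`-based: rotor value `j` at `u` means the rotor points to `succ u j`
(corresponding to `u^(j+1)` in `1`-based notation).  At each step the rotor at the
current particle position is incremented cyclically and the particle moves in the
new rotor direction. -/
def IsRotorWalk {V : Type*} (d : V → ℕ) (succ : V → ℕ → V)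
    (x : ℕ → V) (r : ℕ → V → ℕ) : Prop :=
  (∀ v, r 0 v < d v) ∧
  (∀ t, r (t + 1) (x t) = (r t (x t) + 1) % d (x t)) ∧
  (∀ t v, v ≠ x t → r (t + 1) v = r t v) ∧
  (∀ t, x (t + 1) = succ (x t) (r (t + 1) (x t)))

/-- the number of visits of the walk `x` to `v` strictly before time `t` -/
noncomputable def nvisits {V : Type*} (x : ℕ → V) (t : ℕ) (v : V) : ℕ :=
  ((Finset.range t).filter fun s => x s = v).card

/-- the rotor mechanism `(d, succ)` realizes the transition kernel `p`:
`p u v` is the proportion of the `d u` successors of `u` equal to `v` -/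
def Realizes {V : Type*} (d : V → ℕ) (succ : V → ℕ → V) (p : V → V → ℝ) : Prop :=
  (∀ u, 0 < d u) ∧
  ∀ u v, p u v = ((Finset.range (d u)).filter fun i => succ u i = v).card / d u

/-- irreducibility of the kernel: any vertex can be reached from any other by a path of
positive-probability steps -/
def IrreducibleKernel {V : Type*} (p : V → V → ℝ) : Prop :=
  ∀ u v : V, ∃ (n : ℕ) (f : ℕ → V), f 0 = u ∧ f n = v ∧ ∀ i < n, 0 < p (f i) (f (i + 1))

/-- the set of vertices reachable from `a` in at most `k` steps -/
def reachSet {V : Type*} (p : V → V → ℝ) (a : V) : ℕ → Set V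
  | 0 => {a}
  | k + 1 => reachSet p a k ∪ {v | ∃ u ∈ reachSet p a k, 0 < p u v}

/-- the boundary layer `∂B(d) = B(d) \\ B(d-1)` -/
def layer {V : Type*} (p : V → V → ℝ) (a : V) (dd : ℕ) : Set V :=
  reachSet p a dd \ reachSet p a (dd - 1)

/-- degrees for the truncated chain on `V ⊕ Unit`: the vertex `a` is split into
`a₀ = Sum.inl a` (outgoing) and `a₁ = Sum.inr ()` (incoming, with a single successor
`a₀`), and vertices on the boundary layer `∂B(dd)` have a single successor `a₀`. -/
noncomputable def dHat {V : Type*} (p : V → V → ℝ) (a : V) (d : V → ℕ) (dd : ℕ) :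
    V ⊕ Unit → ℕ
  | Sum.inl u => if u ∈ layer p a dd then 1 else d u
  | Sum.inr _ => 1

/-- successors for the truncated chain: boundary vertices and `a₁` point to `a₀`;
otherwise successors are inherited, with the target `a` replaced by `a₁`. -/
noncomputable def succHat {V : Type*} (p : V → V → ℝ) (a : V) (succ : V → ℕ → V)
    (dd : ℕ) : V ⊕ Unit → ℕ → V ⊕ Unit
  | Sum.inl u, i =>
      if u ∈ layer p a dd then Sum.inl a
      else if succ u i = a then Sum.inr () else Sum.inl (succ u i)
  | Sum.inr _, _ => Sum.inl a

/-- the initial rotor configuration for the truncated chain, inherited from `r₀` -/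
noncomputable def rHat {V : Type*} (p : V → V → ℝ) (a : V) (r₀ : V → ℕ) (dd : ℕ) :
    V ⊕ Unit → ℕ
  | Sum.inl u => if u ∈ layer p a dd then 0 else r₀ u
  | Sum.inr _ => 0

/-- the number of returns to `a₀` among times `1, …, t` -/
noncomputable def returnsBy {V : Type*} (a : V) (xh : ℕ → V ⊕ Unit) (t : ℕ) : ℕ :=
  ((Finset.Icc 1 t).filter fun s => xh s = (Sum.inl a : V ⊕ Unit)).card

/-- `R_n^d`: the number of visits to `a₁` (returns to `a` via finite excursions) before
the `n`-th return to `a₀` -/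
noncomputable def Rnd {V : Type*} (a : V) (xh : ℕ → V ⊕ Unit) (n : ℕ) : ℕ :=
  nvisits xh (sInf {t | n ≤ returnsBy a xh t}) (Sum.inr ())


/-!
Running the walk one particle at a time, the walk up to the `n`-th return to `a₀` is a legal
firing sequence for `n` particles started at `a₀` in the rotor network whose sinks are `a₁` and
the layer `∂B(d)`, and it ends in a stable configuration with `R_n^d` particles at `a₁`. Before
that time the walk only fires vertices of `B(d-1)`, where the networks at depths `d` and `d+1`
agree, so the same sequence is legal at depth `d+1`. By the abelian property every legal sequence
extends to one with the effect of the stabilizing sequence, and sinks never lose particles, so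
`R_n^d ≤ R_n^{d+1}`.
-/

section Reach

variable {V : Type*} {p : V → V → ℝ} {a : V} {d : V → ℕ} {succ : V → ℕ → V}

lemma mem_reachSet_self : ∀ k, a ∈ reachSet p a k
  | 0 => rfl
  | k + 1 => Or.inl (mem_reachSet_self k)

lemma Realizes.pos (h : Realizes d succ p) {u : V} {i : ℕ} (hi : i < d u) :
    0 < p u (succ u i) := by
  rw [h.2]
  exact div_pos (by exact_mod_cast Finset.card_pos.2 ⟨i, by simp [hi]⟩) (by exact_mod_cast h.1 u)

lemma succ_mem_reachSet (h : Realizes d succ p) {k : ℕ} {u : V} (hu : u ∈ reachSet p a k)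
    {i : ℕ} (hi : i < d u) : succ u i ∈ reachSet p a (k + 1) :=
  Or.inr ⟨u, hu, h.pos hi⟩

end Reach

section RotorWalk

variable {W : Type*}

@[simp]
lemma nvisits_zero (x : ℕ → W) (v : W) : nvisits x 0 v = 0 := by
  simp [nvisits]

lemma nvisits_succ (x : ℕ → W) (t : ℕ) (v : W) :
    nvisits x (t + 1) v = nvisits x t v + if x t = v then 1 else 0 := by
  simp only [nvisits, Finset.card_filter, Finset.sum_range_succ]

lemma IsRotorWalk.rotor_eq {D : W → ℕ} {succ : W → ℕ → W} {x : ℕ → W} {r : ℕ → W → ℕ}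
    (hw : IsRotorWalk D succ x r) (t : ℕ) (v : W) :
    r t v = (r 0 v + nvisits x t v) % D v := by
  induction t generalizing v with
  | zero => rw [nvisits_zero, add_zero, Nat.mod_eq_of_lt (hw.1 v)]
  | succ t ih =>
    by_cases hv : v = x t
    · subst hv
      rw [hw.2.1 t, ih, nvisits_succ, if_pos rfl, Nat.mod_add_mod, add_assoc]
    · rw [hw.2.2.1 t v hv, ih, nvisits_succ, if_neg (Ne.symm hv), add_zero]

lemma IsRotorWalk.succ_eq {D : W → ℕ} {succ : W → ℕ → W} {x : ℕ → W} {r : ℕ → W → ℕ}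
    (hw : IsRotorWalk D succ x r) (t : ℕ) :
    x (t + 1) = succ (x t) ((r 0 (x t) + nvisits x t (x t) + 1) % D (x t)) := by
  rw [hw.2.2.2 t, hw.2.1 t, hw.rotor_eq t, Nat.mod_add_mod]

end RotorWalk

namespace RotorRouter

@[ext]
structure Config (W : Type*) where
  chips : W → ℕ
  fired : W → ℕ

section Network

variable {W : Type*} [DecidableEq W] (tgt : W → ℕ → W) (S : W → Prop)

/-- `tgt w k` is where `w` sends a particle when it fires for the `k`-th time, counting from
`0`. -/
noncomputable def fire (c : Config W) (w : W) : Config W where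
  chips := c.chips - Pi.single w 1 + Pi.single (tgt w (c.fired w)) 1
  fired := c.fired + Pi.single w 1

noncomputable def run (c : Config W) (l : List W) : Config W :=
  l.foldl (fire tgt) c

def IsLegal : Config W → List W → Prop
  | _, [] => True
  | c, w :: l => ¬ S w ∧ 0 < c.chips w ∧ IsLegal (fire tgt c w) l

def IsStable (c : Config W) : Prop :=
  ∀ v, ¬ S v → c.chips v = 0

variable {tgt S}

@[simp]
lemma run_nil (c : Config W) : run tgt c [] = c := rfl

@[simp]
lemma run_cons (c : Config W) (w : W) (l : List W) :
    run tgt c (w :: l) = run tgt (fire tgt c w) l := rfl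

lemma run_append (c : Config W) (l₁ l₂ : List W) :
    run tgt c (l₁ ++ l₂) = run tgt (run tgt c l₁) l₂ :=
  List.foldl_append

lemma isLegal_append {c : Config W} {l₁ l₂ : List W} :
    IsLegal tgt S c (l₁ ++ l₂) ↔ IsLegal tgt S c l₁ ∧ IsLegal tgt S (run tgt c l₁) l₂ := by
  induction l₁ generalizing c with
  | nil => simp [IsLegal]
  | cons w l ih => simp only [List.cons_append, IsLegal, ih, run_cons, and_assoc]

lemma IsLegal.not_sink {c : Config W} {l : List W} (h : IsLegal tgt S c l) {w : W}
    (hw : w ∈ l) : ¬ S w := by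
  induction l generalizing c with
  | nil => cases hw
  | cons v l ih =>
    rcases List.mem_cons.1 hw with rfl | hw
    · exact h.1
    · exact ih h.2.2 hw

lemma chips_le_fire (c : Config W) {v w : W} (hvw : v ≠ w) :
    c.chips v ≤ (fire tgt c w).chips v := by
  simp [fire, Pi.single_apply, hvw]

lemma chips_le_run_of_not_mem (c : Config W) {w : W} {l : List W} (hw : w ∉ l) :
    c.chips w ≤ (run tgt c l).chips w := by
  induction l generalizing c with
  | nil => exact le_rfl
  | cons v l ih =>
    rw [List.mem_cons, not_or] at hw
    exact (chips_le_fire c hw.1).trans (ih _ hw.2)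

lemma fire_fire_comm (c : Config W) {v w : W} (hvw : v ≠ w) (hv : 0 < c.chips v)
    (hw : 0 < c.chips w) : fire tgt (fire tgt c v) w = fire tgt (fire tgt c w) v := by
  ext z
  · simp only [fire, Pi.add_apply, Pi.sub_apply, Pi.single_apply, hvw, hvw.symm, if_false,
      add_zero]
    split_ifs <;> simp_all <;> omega
  · simp only [fire, add_right_comm]

lemma IsLegal.move_to_front {c : Config W} {w : W} {l₁ l₂ : List W}
    (h : IsLegal tgt S c (l₁ ++ w :: l₂)) (hw : w ∉ l₁) (hc : 0 < c.chips w) :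
    IsLegal tgt S c (w :: (l₁ ++ l₂)) ∧
      run tgt c (w :: (l₁ ++ l₂)) = run tgt c (l₁ ++ w :: l₂) := by
  induction l₁ generalizing c with
  | nil => exact ⟨h, rfl⟩
  | cons v l₁ ih =>
    rw [List.mem_cons, not_or] at hw
    obtain ⟨hSv, hv, h⟩ := h
    obtain ⟨⟨hSw, -, h⟩, hrun⟩ := ih h hw.2 (hc.trans_le (chips_le_fire c hw.1))
    have hcomm := fire_fire_comm (tgt := tgt) c (Ne.symm hw.1) hv hc
    refine ⟨⟨hSw, hc, hSv, hv.trans_le (chips_le_fire c (Ne.symm hw.1)), hcomm ▸ h⟩, ?_⟩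
    simp only [List.cons_append, run_cons]
    rw [← hcomm, ← run_cons, hrun]

/-- The first vertex `w` fired by `α` also fires in `β`, since otherwise it would keep its
particle; its first firing in `β` can be moved to the front. -/
lemma IsLegal.exists_append_run_eq {c : Config W} {α β : List W} (hα : IsLegal tgt S c α)
    (hβ : IsLegal tgt S c β) (hstab : IsStable S (run tgt c β)) :
    ∃ γ, IsLegal tgt S c (α ++ γ) ∧ run tgt c (α ++ γ) = run tgt c β := by
  induction α generalizing c β with
  | nil => exact ⟨β, hβ, rfl⟩
  | cons w α ih =>
    obtain ⟨hSw, hw, hα⟩ := hα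
    have hwβ : w ∈ β := by
      by_contra hwβ
      have := chips_le_run_of_not_mem (tgt := tgt) c hwβ
      have := hstab w hSw
      omega
    obtain ⟨β₁, β₂, rfl, hwβ₁⟩ := List.eq_append_cons_of_mem hwβ
    obtain ⟨⟨-, -, hβ'⟩, hrun⟩ := hβ.move_to_front hwβ₁ hw
    rw [← hrun, run_cons] at hstab ⊢
    obtain ⟨γ, hγ, hrunγ⟩ := ih hα hβ' hstab
    exact ⟨γ, ⟨hSw, hw, hγ⟩, hrunγ⟩

/-- Extend `α` to the effect of `β`: sinks never fire, so their counts only grow along the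
extension. -/
theorem IsLegal.chips_run_le {c : Config W} {α β : List W} (hα : IsLegal tgt S c α)
    (hβ : IsLegal tgt S c β) (hstab : IsStable S (run tgt c β)) {s : W} (hs : S s) :
    (run tgt c α).chips s ≤ (run tgt c β).chips s := by
  obtain ⟨γ, hγ, hrun⟩ := hα.exists_append_run_eq hβ hstab
  rw [← hrun, run_append]
  exact chips_le_run_of_not_mem _ fun h => (isLegal_append.1 hγ).2.not_sink h hs

lemma IsLegal.congr {tgt' : W → ℕ → W} {S' : W → Prop} {c : Config W} {l : List W}
    (hl : IsLegal tgt S c l) (h : ∀ w ∈ l, ¬ S' w ∧ tgt' w = tgt w) :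
    IsLegal tgt' S' c l ∧ run tgt' c l = run tgt c l := by
  induction l generalizing c with
  | nil => exact ⟨trivial, rfl⟩
  | cons w l ih =>
    obtain ⟨hS', htgt⟩ := h w List.mem_cons_self
    have hfire : fire tgt' c w = fire tgt c w := by simp only [fire, htgt]
    obtain ⟨hl', hrun⟩ := ih hl.2.2 fun v hv => h v (List.mem_cons_of_mem _ hv)
    exact ⟨⟨hS', hl.2.1, hfire ▸ hl'⟩, by rw [run_cons, run_cons, hfire, hrun]⟩

end Network

section RestartWalk

variable {W : Type*}

/-- Rotor walk on a network with sinks, run one particle at a time: a particle entering a sink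
stays there and the next particle starts from `o`. -/
def IsRestartWalk (S : W → Prop) (tgt : W → ℕ → W) (o : W) (x : ℕ → W) : Prop :=
  x 0 = o ∧ ∀ t, x (t + 1) = if S (x t) then o else tgt (x t) (nvisits x t (x t))

variable (S : W → Prop) (x : ℕ → W)

noncomputable def sinkCount (t : ℕ) : ℕ :=
  ((Finset.range t).filter fun s => S (x s)).card

noncomputable def sinkVisits (t : ℕ) : W → ℕ :=
  fun v => if S v then nvisits x t v else 0

noncomputable def firings (t : ℕ) : List W :=
  ((List.range t).map x).filter fun w => ¬ S w

variable {S x}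

@[simp]
lemma firings_zero : firings S x 0 = [] := rfl

@[simp]
lemma sinkCount_zero : sinkCount S x 0 = 0 := by
  simp [sinkCount]

lemma sinkCount_succ (t : ℕ) :
    sinkCount S x (t + 1) = sinkCount S x t + if S (x t) then 1 else 0 := by
  simp only [sinkCount, Finset.card_filter, Finset.sum_range_succ]

lemma firings_succ (t : ℕ) :
    firings S x (t + 1) = firings S x t ++ if S (x t) then [] else [x t] := by
  by_cases h : S (x t) <;> simp [firings, List.range_succ, h]

lemma exists_eq_of_mem_firings {t : ℕ} {w : W} (hw : w ∈ firings S x t) : ∃ s, x s = w := by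
  obtain ⟨s, -, hs⟩ := List.mem_map.1 (List.mem_filter.1 hw).1
  exact ⟨s, hs⟩

lemma exists_sInf_sinkCount_eq {n : ℕ} (hn : 0 < n) (h : ∃ t, n ≤ sinkCount S x t) :
    ∃ t, sInf {t | n ≤ sinkCount S x t} = t + 1 ∧ S (x t) ∧ sinkCount S x t + 1 = n := by
  have hmem : n ≤ sinkCount S x (sInf {t | n ≤ sinkCount S x t}) := Nat.sInf_mem h
  have hpos : 0 < sInf {t | n ≤ sinkCount S x t} := Nat.pos_of_ne_zero fun h0 => by
    rw [h0, sinkCount_zero] at hmem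
    omega
  obtain ⟨t, ht⟩ := Nat.exists_eq_add_one.2 hpos
  have hlt : ¬ n ≤ sinkCount S x t :=
    Nat.notMem_of_lt_sInf (s := {t | n ≤ sinkCount S x t}) (by rw [ht]; exact t.lt_add_one)
  rw [ht, sinkCount_succ] at hmem
  by_cases hs : S (x t)
  · exact ⟨t, ht, hs, by rw [if_pos hs] at hmem; omega⟩
  · rw [if_neg hs] at hmem
    omega

variable [DecidableEq W] {tgt : W → ℕ → W} {o : W}

/-- At time `t`, `m` particles still wait at `o`, one is at `x t`, and the others are in
the sinks. -/
lemma IsRestartWalk.run_firings (hx : IsRestartWalk S tgt o x) (t m : ℕ) :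
    IsLegal tgt S ⟨Pi.single o (sinkCount S x t + m + 1), 0⟩ (firings S x t) ∧
      run tgt ⟨Pi.single o (sinkCount S x t + m + 1), 0⟩ (firings S x t) =
        ⟨Pi.single o m + sinkVisits S x t + Pi.single (x t) 1,
          fun v => if S v then 0 else nvisits x t v⟩ := by
  induction t generalizing m with
  | zero =>
    refine ⟨trivial, ?_⟩
    ext v
    · simp only [firings_zero, sinkCount_zero, run_nil, sinkVisits, nvisits_zero, hx.1,
        Pi.add_apply, Pi.single_apply]
      grind
    · simp
  | succ t ih =>
    rw [sinkCount_succ, firings_succ]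
    by_cases hs : S (x t)
    · obtain ⟨hl, hrun⟩ := ih (m + 1)
      rw [if_pos hs, if_pos hs, List.append_nil,
        show sinkCount S x t + 1 + m + 1 = sinkCount S x t + (m + 1) + 1 by omega]
      refine ⟨hl, hrun.trans ?_⟩
      rw [hx.2 t, if_pos hs]
      ext v
      · simp only [sinkVisits, nvisits_succ, Pi.add_apply, Pi.single_apply]
        grind
      · simp only [nvisits_succ]
        grind
    · obtain ⟨hl, hrun⟩ := ih m
      rw [if_neg hs, if_neg hs, add_zero]
      have hchip : 0 < (run tgt ⟨Pi.single o (sinkCount S x t + m + 1), 0⟩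
          (firings S x t)).chips (x t) := by
        simp [hrun]
      refine ⟨isLegal_append.2 ⟨hl, hs, hchip, trivial⟩, ?_⟩
      rw [run_append, hrun, run_cons, run_nil, hx.2 t, if_neg hs]
      ext v
      · simp only [fire, sinkVisits, nvisits_succ, Pi.add_apply, Pi.sub_apply, Pi.single_apply,
          hs, if_false]
        grind
      · simp only [fire, nvisits_succ, Pi.add_apply, Pi.single_apply]
        grind

lemma IsRestartWalk.exists_firings (hx : IsRestartWalk S tgt o x) {n : ℕ} (hn : 0 < n)
    (h : ∃ t, n ≤ sinkCount S x t) :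
    ∃ l, (∀ w ∈ l, ∃ t, x t = w) ∧ IsLegal tgt S ⟨Pi.single o n, 0⟩ l ∧
      (run tgt ⟨Pi.single o n, 0⟩ l).chips = sinkVisits S x (sInf {t | n ≤ sinkCount S x t}) := by
  obtain ⟨t, hT, hs, hcount⟩ := exists_sInf_sinkCount_eq hn h
  obtain ⟨hl, hrun⟩ := hx.run_firings t 0
  rw [add_zero, hcount] at hl hrun
  refine ⟨firings S x t, fun w hw => exists_eq_of_mem_firings hw, hl, ?_⟩
  rw [hrun, hT]
  ext v
  simp only [sinkVisits, nvisits_succ, Pi.add_apply, Pi.single_apply]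
  grind

lemma IsRestartWalk.card_returns (hx : IsRestartWalk S tgt o x)
    (htgt : ∀ w k, ¬ S w → tgt w k ≠ o) (t : ℕ) :
    ((Finset.Icc 1 t).filter fun s => x s = o).card = sinkCount S x t := by
  induction t with
  | zero => simp
  | succ t ih =>
    have hret : x (t + 1) = o ↔ S (x t) := by
      rw [hx.2 t]
      split_ifs with hs
      · exact iff_of_true rfl hs
      · exact iff_of_false (htgt _ _ hs) hs
    rw [Finset.card_filter, Finset.sum_Icc_succ_top (by omega), ← Finset.card_filter, ih,
      sinkCount_succ]
    simp only [hret]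

end RestartWalk

section Hat

variable {V : Type*} (p : V → V → ℝ) (a : V) (d : V → ℕ) (succ : V → ℕ → V) (r₀ : V → ℕ)

def hatSink (D : ℕ) : V ⊕ Unit → Prop
  | Sum.inl u => u ∈ layer p a D
  | Sum.inr _ => True

noncomputable def hatTgt (D : ℕ) (w : V ⊕ Unit) (k : ℕ) : V ⊕ Unit :=
  succHat p a succ D w ((rHat p a r₀ D w + k + 1) % dHat p a d D w)

variable {p a d succ r₀}

lemma hatTgt_of_hatSink {D : ℕ} {w : V ⊕ Unit} (hw : hatSink p a D w) (k : ℕ) :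
    hatTgt p a d succ r₀ D w k = Sum.inl a := by
  cases w with
  | inl u => simp [hatTgt, succHat, show u ∈ layer p a D from hw]
  | inr => rfl

lemma hatTgt_inl_of_not_mem_layer {D : ℕ} {u : V} (hd : 0 < d u) (hu : u ∉ layer p a D)
    (k : ℕ) : ∃ i < d u, hatTgt p a d succ r₀ D (Sum.inl u) k =
      if succ u i = a then Sum.inr () else Sum.inl (succ u i) :=
  ⟨(r₀ u + k + 1) % d u, Nat.mod_lt _ hd, by simp [hatTgt, succHat, dHat, rHat, hu]⟩

lemma hatTgt_ne_inl_self {D : ℕ} {w : V ⊕ Unit} (hw : ¬ hatSink p a D w) (k : ℕ) :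
    hatTgt p a d succ r₀ D w k ≠ Sum.inl a := by
  cases w with
  | inl u =>
    simp only [hatTgt, succHat, if_neg (show u ∉ layer p a D from hw)]
    split_ifs with h <;> simp [h]
  | inr => exact absurd trivial hw

lemma not_hatSink_succ_and_hatTgt_succ_eq_of_mem_reachSet {D : ℕ} {u : V}
    (hu : u ∈ reachSet p a D) (hl : u ∉ layer p a D) :
    ¬ hatSink p a (D + 1) (Sum.inl u) ∧
      hatTgt p a d succ r₀ (D + 1) (Sum.inl u) = hatTgt p a d succ r₀ D (Sum.inl u) := by
  have hl' : u ∉ layer p a (D + 1) := fun h => h.2 hu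
  exact ⟨hl', funext fun k => by simp [hatTgt, succHat, dHat, rHat, hl, hl']⟩

lemma isRestartWalk_of_isRotorWalk {D : ℕ} {x : ℕ → V ⊕ Unit} {r : ℕ → V ⊕ Unit → ℕ}
    (hw : IsRotorWalk (dHat p a d D) (succHat p a succ D) x r) (hx0 : x 0 = Sum.inl a)
    (hr0 : ∀ w, r 0 w = rHat p a r₀ D w) :
    IsRestartWalk (hatSink p a D) (hatTgt p a d succ r₀ D) (Sum.inl a) x := by
  refine ⟨hx0, fun t => ?_⟩
  have hstep : x (t + 1) = hatTgt p a d succ r₀ D (x t) (nvisits x t (x t)) := by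
    rw [hw.succ_eq, hr0]
    rfl
  split_ifs with hs
  · rw [hstep, hatTgt_of_hatSink hs]
  · exact hstep

lemma IsRestartWalk.mem_reachSet_of_hat (hreal : Realizes d succ p) {D : ℕ} (hD : 1 ≤ D)
    {x : ℕ → V ⊕ Unit}
    (hx : IsRestartWalk (hatSink p a D) (hatTgt p a d succ r₀ D) (Sum.inl a) x) (t : ℕ)
    {v : V} (hv : x t = Sum.inl v) : v ∈ reachSet p a D := by
  induction t generalizing v with
  | zero =>
    rw [hx.1, Sum.inl.injEq] at hv
    exact hv ▸ mem_reachSet_self D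
  | succ t ih =>
    rw [hx.2 t] at hv
    split_ifs at hv with hs
    · exact Sum.inl.inj hv ▸ mem_reachSet_self D
    rcases hxt : x t with u | _
    · rw [hxt] at hs hv
      have hu : u ∈ reachSet p a (D - 1) := by
        by_contra h
        exact hs ⟨ih hxt, h⟩
      obtain ⟨i, hi, htgt⟩ :=
        hatTgt_inl_of_not_mem_layer (r₀ := r₀) (hreal.1 u) hs (nvisits x t (Sum.inl u))
      rw [htgt] at hv
      split_ifs at hv
      rw [← Sum.inl.inj hv, ← Nat.sub_add_cancel hD]
      exact succ_mem_reachSet hreal hu hi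
    · rw [hxt] at hs
      exact absurd trivial hs

lemma IsRestartWalk.not_hatSink_succ_and_hatTgt_succ_eq (hreal : Realizes d succ p) {D : ℕ}
    (hD : 1 ≤ D) {x : ℕ → V ⊕ Unit}
    (hx : IsRestartWalk (hatSink p a D) (hatTgt p a d succ r₀ D) (Sum.inl a) x) {t : ℕ}
    (ht : ¬ hatSink p a D (x t)) :
    ¬ hatSink p a (D + 1) (x t) ∧
      hatTgt p a d succ r₀ (D + 1) (x t) = hatTgt p a d succ r₀ D (x t) := by
  rcases hxt : x t with u | _
  · rw [hxt] at ht
    exact not_hatSink_succ_and_hatTgt_succ_eq_of_mem_reachSet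
      (hx.mem_reachSet_of_hat hreal hD t hxt) ht
  · rw [hxt] at ht
    exact absurd trivial ht

theorem exists_isLegal_isStable_of_isRotorWalk {D n : ℕ} {x : ℕ → V ⊕ Unit} {r : ℕ → V ⊕ Unit → ℕ}
    (hw : IsRotorWalk (dHat p a d D) (succHat p a succ D) x r) (hx0 : x 0 = Sum.inl a)
    (hr0 : ∀ w, r 0 w = rHat p a r₀ D w) (hn : 0 < n) (hret : ∃ t, n ≤ returnsBy a x t) :
    ∃ l, (∀ w ∈ l, ∃ t, x t = w) ∧
      IsLegal (hatTgt p a d succ r₀ D) (hatSink p a D) ⟨Pi.single (Sum.inl a) n, 0⟩ l ∧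
      IsStable (hatSink p a D) (run (hatTgt p a d succ r₀ D) ⟨Pi.single (Sum.inl a) n, 0⟩ l) ∧
      (run (hatTgt p a d succ r₀ D) ⟨Pi.single (Sum.inl a) n, 0⟩ l).chips (Sum.inr ()) =
        Rnd a x n := by
  have hx := isRestartWalk_of_isRotorWalk hw hx0 hr0
  have hcount : returnsBy a x = sinkCount (hatSink p a D) x :=
    funext fun t => hx.card_returns (fun _ k hw => hatTgt_ne_inl_self hw k) t
  rw [hcount] at hret
  obtain ⟨l, hvis, hl, hrun⟩ := hx.exists_firings hn hret
  refine ⟨l, hvis, hl, fun v hv => by rw [hrun]; exact if_neg hv, ?_⟩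
  rw [hrun, Rnd, hcount]
  exact if_pos trivial

end Hat

end RotorRouter

lemma Rnd_zero {V : Type*} (a : V) (x : ℕ → V ⊕ Unit) : Rnd a x 0 = 0 := by
  simp [Rnd]

open RotorRouter in
theorem truncated_returns_mono_general {V : Type*}
    (p : V → V → ℝ) (a : V) (d : V → ℕ) (succ : V → ℕ → V)
    (hreal : Realizes d succ p)
    (r₀ : V → ℕ)
    (n dd : ℕ) (hdd : 1 ≤ dd)
    (x₁ : ℕ → V ⊕ Unit) (r₁ : ℕ → V ⊕ Unit → ℕ)
    (hw₁ : IsRotorWalk (dHat p a d dd) (succHat p a succ dd) x₁ r₁)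
    (hx₁ : x₁ 0 = Sum.inl a) (hr₁ : ∀ w, r₁ 0 w = rHat p a r₀ dd w)
    (hret₁ : ∃ t, n ≤ returnsBy a x₁ t)
    (x₂ : ℕ → V ⊕ Unit) (r₂ : ℕ → V ⊕ Unit → ℕ)
    (hw₂ : IsRotorWalk (dHat p a d (dd + 1)) (succHat p a succ (dd + 1)) x₂ r₂)
    (hx₂ : x₂ 0 = Sum.inl a) (hr₂ : ∀ w, r₂ 0 w = rHat p a r₀ (dd + 1) w)
    (hret₂ : ∃ t, n ≤ returnsBy a x₂ t) :
    Rnd a x₁ n ≤ Rnd a x₂ n := by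
  rcases Nat.eq_zero_or_pos n with rfl | hn
  · rw [Rnd_zero, Rnd_zero]
  obtain ⟨l₁, hvis₁, hl₁, -, hR₁⟩ := exists_isLegal_isStable_of_isRotorWalk hw₁ hx₁ hr₁ hn hret₁
  obtain ⟨l₂, -, hl₂, hstab₂, hR₂⟩ := exists_isLegal_isStable_of_isRotorWalk hw₂ hx₂ hr₂ hn hret₂
  have hagree : ∀ w ∈ l₁, ¬ hatSink p a (dd + 1) w ∧
      hatTgt p a d succ r₀ (dd + 1) w = hatTgt p a d succ r₀ dd w := by
    intro w hmem
    obtain ⟨t, rfl⟩ := hvis₁ w hmem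
    exact (isRestartWalk_of_isRotorWalk hw₁ hx₁ hr₁).not_hatSink_succ_and_hatTgt_succ_eq hreal hdd
      (hl₁.not_sink hmem)
  obtain ⟨hl₁', hrun⟩ := hl₁.congr hagree
  rw [← hR₁, ← hR₂, ← hrun]
  exact hl₁'.chips_run_le hl₂ hstab₂ trivial

/-- Lemma `mono`: `R_n^{d+1} ≥ R_n^d`. -/
theorem truncated_returns_mono {V : Type*} [Countable V]
    (p : V → V → ℝ) (a : V) (d : V → ℕ) (succ : V → ℕ → V)
    (hreal : Realizes d succ p) (hirr : IrreducibleKernel p)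
    (r₀ : V → ℕ) (hr₀ : ∀ v, r₀ v < d v)
    (n dd : ℕ) (hdd : 1 ≤ dd)
    (x₁ : ℕ → V ⊕ Unit) (r₁ : ℕ → V ⊕ Unit → ℕ)
    (hw₁ : IsRotorWalk (dHat p a d dd) (succHat p a succ dd) x₁ r₁)
    (hx₁ : x₁ 0 = Sum.inl a) (hr₁ : ∀ w, r₁ 0 w = rHat p a r₀ dd w)
    (hret₁ : ∃ t, n ≤ returnsBy a x₁ t)
    (x₂ : ℕ → V ⊕ Unit) (r₂ : ℕ → V ⊕ Unit → ℕ)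
    (hw₂ : IsRotorWalk (dHat p a d (dd + 1)) (succHat p a succ (dd + 1)) x₂ r₂)
    (hx₂ : x₂ 0 = Sum.inl a) (hr₂ : ∀ w, r₂ 0 w = rHat p a r₀ (dd + 1) w)
    (hret₂ : ∃ t, n ≤ returnsBy a x₂ t) :
    Rnd a x₁ n ≤ Rnd a x₂ n :=
  truncated_returns_mono_general p a d succ hreal r₀ n dd hdd x₁ r₁ hw₁ hx₁ hr₁ hret₁ x₂ r₂ hw₂ hx₂
    hr₂ hret₂
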